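/- Let d ≥ 1, g ≥ 0, and suppose T₁, …, T_d, X₁, …, X_g are bounded operators on H with each Xⱼ self-adjoint and Σᵢ TᵢTᵢ* + Σⱼ Xⱼ² ≤ I, but Σᵢ TᵢTᵢ* + Σⱼ Xⱼ² ≠ I. Then there is a nontrivial dilation staying in the set: with A = (I − Σ TᵢTᵢ* − Σ Xⱼ²)^{1/2} ≠ 0, the tuple with first coordinate [[T₁, A],[0, 0]], other Tᵢ-coordinates [[Tᵢ, 0],[0, 0]], and Xⱼ-coordinates [[Xⱼ, 0],[0, 0]], satisfies the same contraction inequality Σ SᵢSᵢ* + Σ Yⱼ² ≤ I, with self-adjoint Yⱼ, and has a nonzero off-diagonal block. -/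

import Mathlib

/-!
Since `A` is self-adjoint with `A² = I − ∑ TᵢTᵢ* − ∑ Xⱼ²`, the row `[T₁, A]` contributes
`T₁T₁* + A²` to the top-left corner, so `∑ SᵢSᵢ* + ∑ Yⱼ²` is the block operator `[[I, 0], [0, 0]]`.
Its complement `[[0, 0], [0, I]]` is `PP*` for `P = [[0, 0], [0, I]]`, hence positive.
-/

open ContinuousLinearMap
variable {H : Type*} [NormedAddCommGroup H] [InnerProductSpace ℂ H]

/-- The block operator `[[A, B], [C, D]]` on the Hilbert space direct sum `H ⊕ H`. -/
noncomputable def blockOp (A B C D : H →L[ℂ] H) :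
    WithLp 2 (H × H) →L[ℂ] WithLp 2 (H × H) :=
  ((WithLp.prodContinuousLinearEquiv 2 ℂ H H).symm : H × H →L[ℂ] WithLp 2 (H × H)) ∘L
    ((A ∘L ContinuousLinearMap.fst ℂ H H + B ∘L ContinuousLinearMap.snd ℂ H H).prod
      (C ∘L ContinuousLinearMap.fst ℂ H H + D ∘L ContinuousLinearMap.snd ℂ H H)) ∘L
    ((WithLp.prodContinuousLinearEquiv 2 ℂ H H : WithLp 2 (H × H) ≃L[ℂ] H × H) :
      WithLp 2 (H × H) →L[ℂ] H × H)

@[ext]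
lemma WithLp.prod_ext {p : ENNReal} {α β : Type*} [AddCommGroup α] [AddCommGroup β]
    {x y : WithLp p (α × β)} (h₁ : x.fst = y.fst) (h₂ : x.snd = y.snd) : x = y :=
  WithLp.ofLp_injective p (Prod.ext h₁ h₂)

lemma blockOp_apply (A B C D : H →L[ℂ] H) (x : WithLp 2 (H × H)) :
    blockOp A B C D x = WithLp.toLp 2 (A x.fst + B x.snd, C x.fst + D x.snd) := rfl

lemma blockOp_zero : blockOp (0 : H →L[ℂ] H) 0 0 0 = 0 := by
  ext x <;> simp [blockOp_apply]

lemma blockOp_one : blockOp (1 : H →L[ℂ] H) 0 0 1 = 1 := by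
  ext x <;> simp [blockOp_apply]

lemma blockOp_add (A B C D A' B' C' D' : H →L[ℂ] H) :
    blockOp A B C D + blockOp A' B' C' D' =
      blockOp (A + A') (B + B') (C + C') (D + D') := by
  ext x <;> simp only [add_apply, blockOp_apply, WithLp.add_fst, WithLp.add_snd,
    WithLp.toLp_fst, WithLp.toLp_snd] <;> abel

lemma blockOp_sum {ι : Type*} (s : Finset ι) (A B C D : ι → H →L[ℂ] H) :
    ∑ i ∈ s, blockOp (A i) (B i) (C i) (D i) =
      blockOp (∑ i ∈ s, A i) (∑ i ∈ s, B i) (∑ i ∈ s, C i) (∑ i ∈ s, D i) := by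
  classical
  induction s using Finset.induction with
  | empty => simp only [Finset.sum_empty, blockOp_zero]
  | insert a s ha ih => simp only [Finset.sum_insert ha, ih, blockOp_add]

lemma blockOp_comp (A B C D A' B' C' D' : H →L[ℂ] H) :
    blockOp A B C D ∘L blockOp A' B' C' D' =
      blockOp (A ∘L A' + B ∘L C') (A ∘L B' + B ∘L D')
        (C ∘L A' + D ∘L C') (C ∘L B' + D ∘L D') := by
  ext x <;> simp only [comp_apply, blockOp_apply, add_apply, map_add, WithLp.toLp_fst,
    WithLp.toLp_snd] <;> abel

section

variable [CompleteSpace H]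

lemma blockOp_adjoint (A B C D : H →L[ℂ] H) :
    adjoint (blockOp A B C D) = blockOp (adjoint A) (adjoint C) (adjoint B) (adjoint D) := by
  refine ((eq_adjoint_iff _ _).mpr fun x y => ?_).symm
  simp only [blockOp_apply, WithLp.prod_inner_apply,
    WithLp.ofLp_fst, WithLp.ofLp_snd, inner_add_left, inner_add_right, adjoint_inner_left]
  ring

lemma IsSelfAdjoint.blockOp_diag {A D : H →L[ℂ] H} (hA : IsSelfAdjoint A)
    (hD : IsSelfAdjoint D) : IsSelfAdjoint (blockOp A 0 0 D) := by
  rw [IsSelfAdjoint, star_eq_adjoint, blockOp_adjoint, ← star_eq_adjoint, ← star_eq_adjoint,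
    ← star_eq_adjoint, hA.star_eq, hD.star_eq, star_zero]

lemma blockOp_row_comp_adjoint (A B : H →L[ℂ] H) :
    blockOp A B 0 0 ∘L adjoint (blockOp A B 0 0) =
      blockOp (A ∘L adjoint A + B ∘L adjoint B) 0 0 0 := by
  simp [blockOp_adjoint, blockOp_comp]

lemma isPositive_blockOp_zero_zero_zero_one : (blockOp (0 : H →L[ℂ] H) 0 0 1).IsPositive := by
  have h : blockOp (0 : H →L[ℂ] H) 0 0 1 = blockOp 0 0 0 1 ∘L adjoint (blockOp 0 0 0 1) := by
    simp [blockOp_adjoint, blockOp_comp, one_def, adjoint_id]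
  rw [h]
  exact isPositive_self_comp_adjoint _

end

theorem stmt_4_general [CompleteSpace H] (d g : ℕ) (hd : 1 ≤ d)
    (T : Fin d → H →L[ℂ] H) (X : Fin g → H →L[ℂ] H)
    (hXsa : ∀ j, IsSelfAdjoint (X j))
    (hne : ∑ i, (T i) ∘L adjoint (T i) + ∑ j, (X j) ∘L (X j) ≠ 1)
    (A : H →L[ℂ] H) (hA : A.IsPositive)
    (hAsq : A ∘L A = 1 - (∑ i, (T i) ∘L adjoint (T i) + ∑ j, (X j) ∘L (X j)))
    (S : Fin d → WithLp 2 (H × H) →L[ℂ] WithLp 2 (H × H))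
    (Y : Fin g → WithLp 2 (H × H) →L[ℂ] WithLp 2 (H × H))
    (hS : ∀ i, S i = if i = (⟨0, hd⟩ : Fin d) then blockOp (T i) A 0 0
      else blockOp (T i) 0 0 0)
    (hY : ∀ j, Y j = blockOp (X j) 0 0 0) :
    A ≠ 0 ∧
      (1 - (∑ i, (S i) ∘L adjoint (S i) + ∑ j, (Y j) ∘L (Y j))).IsPositive ∧
      (∀ j, IsSelfAdjoint (Y j)) := by
  have hSS : ∀ i, S i ∘L adjoint (S i) =
      blockOp (T i ∘L adjoint (T i) + if i = ⟨0, hd⟩ then A ∘L A else 0) 0 0 0 := by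
    intro i
    rw [hS i]
    split_ifs <;> simp [blockOp_row_comp_adjoint, hA.isSelfAdjoint.adjoint_eq]
  have hYY : ∀ j, Y j ∘L Y j = blockOp (X j ∘L X j) 0 0 0 := fun j => by
    simp [hY j, blockOp_comp]
  have hsum : ∑ i, S i ∘L adjoint (S i) + ∑ j, Y j ∘L Y j = blockOp 1 0 0 0 := by
    simp only [hSS, hYY, blockOp_sum, Finset.sum_const_zero, blockOp_add, add_zero,
      Finset.sum_add_distrib, Finset.sum_ite_eq', Finset.mem_univ, if_true, hAsq]
    congr 1
    abel
  have hcompl : 1 - blockOp (1 : H →L[ℂ] H) 0 0 0 = blockOp 0 0 0 1 := by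
    rw [← blockOp_one, sub_eq_iff_eq_add, blockOp_add]
    simp
  refine ⟨?_, ?_, fun j => hY j ▸ (hXsa j).blockOp_diag (.zero _)⟩
  · rintro rfl
    exact hne (sub_eq_zero.mp (by simpa using hAsq.symm)).symm
  · rw [hsum, hcompl]
    exact isPositive_blockOp_zero_zero_zero_one

/-- Theorem 2.8 ('only if', condition (1)): if `∑ Tᵢ Tᵢ* + ∑ Xⱼ² ≤ I` but the sum
is not equal to `I`, then with `A = (I − ∑ Tᵢ Tᵢ* − ∑ Xⱼ²)^{1/2} ≠ 0` the indicated
block dilation stays in `D^{d,g}` and is nontrivial. -/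
theorem stmt_4 [CompleteSpace H] (d g : ℕ) (hd : 1 ≤ d)
    (T : Fin d → H →L[ℂ] H) (X : Fin g → H →L[ℂ] H)
    (hXsa : ∀ j, IsSelfAdjoint (X j))
    (hcontr : (1 - (∑ i, (T i) ∘L adjoint (T i) + ∑ j, (X j) ∘L (X j))).IsPositive)
    (hne : ∑ i, (T i) ∘L adjoint (T i) + ∑ j, (X j) ∘L (X j) ≠ 1)
    (A : H →L[ℂ] H) (hA : A.IsPositive)
    (hAsq : A ∘L A = 1 - (∑ i, (T i) ∘L adjoint (T i) + ∑ j, (X j) ∘L (X j)))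
    (S : Fin d → WithLp 2 (H × H) →L[ℂ] WithLp 2 (H × H))
    (Y : Fin g → WithLp 2 (H × H) →L[ℂ] WithLp 2 (H × H))
    (hS : ∀ i, S i = if i = (⟨0, hd⟩ : Fin d) then blockOp (T i) A 0 0
      else blockOp (T i) 0 0 0)
    (hY : ∀ j, Y j = blockOp (X j) 0 0 0) :
    A ≠ 0 ∧
      (1 - (∑ i, (S i) ∘L adjoint (S i) + ∑ j, (Y j) ∘L (Y j))).IsPositive ∧
      (∀ j, IsSelfAdjoint (Y j)) :=
  stmt_4_general d g hd T X hXsa hne A hA hAsq S Y hS hY
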